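/- Let f : 2^N → ℝ be monotone and submodular with f(∅) = 0 and f(N) > 0, let each element of N have a positive cost, and let γ > 1. Let fmin := min{f(u | S) : u ∈ N, S ⊆ N, f(u | S) > 0} and let c_opt := min{c(S*) : S* ⊆ N, f(S*) = f(N)}. Let π be a permutation of N that has no swaps and no γ-moves with respect to the weighted coverage mff_π. Then: (i) there is no element u ∈ N with 0 < mff_π(u) ≤ fmin / (γ · c_opt²); and (ii) the total cost of all elements u with mff_π(u) ≥ f(N)² / (fmin · c_opt²) is at most √γ · c_opt. -/

import Mathlib

/-!
Telescoping along `ψ` gives `∑_j I_f(b; ψ_j | C ∪ ψ_{1:j−1}) = f(b | C)`, and the terms with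
`c(ψ_j) > c(S*)` vanish because all of `S*` precedes such `ψ_j`; hence the weighted coverage of
`b` placed after `C` is at least `f(b | C) / (c(b) · c(S*))`. Local optimality says that if
`mff_π(π_i) > 0`, any element `u` at or behind position `i`, moved to position `i`, would have
weighted coverage below `γ · mff_π(π_i)`.

For (i), apply this to each `u ∈ S*`: by submodularity
`fmin ≤ f(π_i | π_{1:i−1}) ≤ ∑_{u ∈ S*} f(u | π_{1:i−1}) < γ · mff_π(π_i) · c(S*)²`.
For (ii), apply it to each `ψ_j` contributing to `π_i`, keeping only its diagonal term: this gives
`fmin ≤ γ · mff_π(π_i) · c(ψ_j)²`, so `c(ψ_j)⁻¹ ≤ √(γ · mff_π(π_i) / fmin)` and summing over `j`,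
`c(π_i) · f(N) ≤ √γ · c(S*) · f(π_i | π_{1:i−1})` for every element of large weighted coverage.
These marginal gains add up to at most `f(N)`.
-/

open Finset

/-- The marginal value `f(A | C) := f(A ∪ C) - f(C)` of a set function. -/
def margS {V : Type*} [DecidableEq V] (f : Finset V → ℝ) (A C : Finset V) : ℝ :=
  f (A ∪ C) - f C

/-- The marginal value `f(u | C) := f({u} ∪ C) - f C`. -/
def marg {V : Type*} [DecidableEq V] (f : Finset V → ℝ) (u : V) (C : Finset V) : ℝ :=
  f (insert u C) - f C

/-- The conditional mutual coverage `I_f(A; B | C) := f(A|C) + f(B|C) - f(A ∪ B | C)`. -/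
def mutcov {V : Type*} [DecidableEq V] (f : Finset V → ℝ) (A B C : Finset V) : ℝ :=
  margS f A C + margS f B C - margS f (A ∪ B) C

/-- The prefix `π_{1:i}` of a permutation `π` (0-indexed: the set of the first `i` elements). -/
def pref {V : Type*} [DecidableEq V] {n : ℕ} (π : Fin n → V) (i : ℕ) : Finset V :=
  (Finset.univ.filter fun j : Fin n => (j : ℕ) < i).image π

/-- The `(i,j)` mutual affinity of the pair of permutations `(α, β)`:
`I_{α,β}(α_i, β_j) := I_f(α_i; β_j | α_{1:i−1} ∪ β_{1:j−1})`. -/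
def mfI {V : Type*} [DecidableEq V] {n : ℕ} (f : Finset V → ℝ) (a b : Fin n → V)
    (i j : Fin n) : ℝ :=
  mutcov f {a i} {b j} (pref a i ∪ pref b j)

/-- The weighted coverage `mff_π(π_i) := ∑_j I_{π,ψ}(π_i, ψ_j) / (c(π_i)·c(ψ_j))`. -/
noncomputable def mffw {V : Type*} [Fintype V] [DecidableEq V] {n : ℕ} (f : Finset V → ℝ)
    (c : V → ℝ) (π ψ : Fin n → V) (i : Fin n) : ℝ :=
  ∑ j : Fin n, mfI f π ψ i j / (c (π i) * c (ψ j))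

/-- The weighted coverage that the element `π_q` would have after being moved to position
`p`, i.e. `mff_{π′}(π′_p)` where `π′` is obtained from `π` by moving `π_q` to position `p`
(the prefix of `π′` at position `p` is `π_{1:p−1}`). -/
noncomputable def mffwMove {V : Type*} [Fintype V] [DecidableEq V] {n : ℕ}
    (f : Finset V → ℝ) (c : V → ℝ) (π ψ : Fin n → V) (p q : Fin n) : ℝ :=
  ∑ j : Fin n, mutcov f {π q} {ψ j} (pref π p ∪ pref ψ j) / (c (π q) * c (ψ j))

lemma mul_le_sqrt_mul_mul_of_mul_le_sqrt {x M R F a b γ : ℝ} (hx : 0 ≤ x) (hM : 0 < M)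
    (ha : 0 < a) (hb : 0 < b) (hγ : 0 ≤ γ) (hR : 0 ≤ R) (hθ : F ^ 2 / (a * b ^ 2) ≤ M)
    (h : x * M ≤ √(γ * M / a) * R) :
    x * F ≤ √γ * b * R := by
  have hsq_row : (x * M) ^ 2 ≤ γ * M / a * R ^ 2 := by
    calc (x * M) ^ 2 ≤ (√(γ * M / a) * R) ^ 2 := pow_le_pow_left₀ (mul_nonneg hx hM.le) h 2
      _ = γ * M / a * R ^ 2 := by rw [mul_pow, Real.sq_sqrt (by positivity)]
  have hrow : x ^ 2 * M * a ≤ γ * R ^ 2 := by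
    rw [div_mul_eq_mul_div, le_div_iff₀ ha] at hsq_row
    nlinarith
  have hθ' : F ^ 2 ≤ M * (a * b ^ 2) := (div_le_iff₀ (by positivity)).1 hθ
  have hsq : (x * F) ^ 2 ≤ (√γ * b * R) ^ 2 := by
    calc (x * F) ^ 2 ≤ x ^ 2 * (M * (a * b ^ 2)) := by
          rw [mul_pow]; exact mul_le_mul_of_nonneg_left hθ' (sq_nonneg _)
      _ = x ^ 2 * M * a * b ^ 2 := by ring
      _ ≤ γ * R ^ 2 * b ^ 2 := mul_le_mul_of_nonneg_right hrow (sq_nonneg _)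
      _ = (√γ * b * R) ^ 2 := by rw [mul_pow, mul_pow, Real.sq_sqrt hγ]; ring
  exact le_of_pow_le_pow_left₀ two_ne_zero (by positivity) hsq

section SetFunction

variable {V : Type*} [DecidableEq V] {f : Finset V → ℝ}

def IsSubmodular (f : Finset V → ℝ) : Prop :=
  ∀ A B : Finset V, f (A ∪ B) + f (A ∩ B) ≤ f A + f B

lemma margS_singleton (b : V) (C : Finset V) : margS f {b} C = marg f b C := by
  rw [margS, marg, insert_eq]

lemma margS_nonneg (hmono : Monotone f) (A C : Finset V) : 0 ≤ margS f A C :=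
  sub_nonneg.2 (hmono subset_union_right)

lemma margS_eq_zero_of_subset {A C : Finset V} (h : A ⊆ C) : margS f A C = 0 := by
  rw [margS, union_eq_right.2 h, sub_self]

lemma margS_eq_zero_of_apply_eq_univ [Fintype V] (hmono : Monotone f) {C : Finset V}
    (hC : f C = f univ) (A : Finset V) : margS f A C = 0 :=
  le_antisymm (by rw [margS, hC, sub_nonpos]; exact hmono (subset_univ _))
    (margS_nonneg hmono A C)

lemma margS_le_margS_of_apply_eq_univ [Fintype V] (hmono : Monotone f) {S : Finset V}
    (hS : f S = f univ) (A C : Finset V) : margS f A C ≤ margS f S C := by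
  have hSC : f (S ∪ C) = f univ :=
    le_antisymm (hmono (subset_univ _)) (hS ▸ hmono subset_union_left)
  rw [margS, margS, hSC]
  exact sub_le_sub_right (hmono (subset_univ _)) _

lemma margS_antitone (hmono : Monotone f) (hsub : IsSubmodular f)
    (A : Finset V) {C D : Finset V} (hCD : C ⊆ D) : margS f A D ≤ margS f A C := by
  have hunion : (A ∪ C) ∪ D = A ∪ D := by
    rw [union_assoc, union_eq_right.2 hCD]
  have hinter : C ⊆ (A ∪ C) ∩ D := subset_inter subset_union_right hCD
  have := hsub (A ∪ C) D
  rw [hunion] at this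
  have := hmono hinter
  rw [margS, margS]
  linarith

lemma margS_le_sum_margS_singleton (hmono : Monotone f) (hsub : IsSubmodular f) (S C : Finset V) :
    margS f S C ≤ ∑ u ∈ S, margS f {u} C := by
  induction S using Finset.induction_on with
  | empty => simp [margS]
  | insert a S ha ih =>
    have hsplit : margS f (insert a S) C = margS f {a} (S ∪ C) + margS f S C := by
      rw [margS, margS, margS, insert_eq, union_assoc]
      ring
    rw [sum_insert ha, hsplit]
    exact add_le_add (margS_antitone hmono hsub {a} subset_union_right) ih

lemma mutcov_eq_margS_sub (A B C : Finset V) :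
    mutcov f A B C = margS f A C - margS f A (B ∪ C) := by
  rw [mutcov, margS, margS, margS, margS, union_assoc]
  ring

lemma mutcov_self (A C : Finset V) : mutcov f A A C = margS f A C := by
  rw [mutcov, union_self, add_sub_cancel_right]

lemma mutcov_nonneg (hmono : Monotone f) (hsub : IsSubmodular f) (A B C : Finset V) :
    0 ≤ mutcov f A B C := by
  rw [mutcov_eq_margS_sub, sub_nonneg]
  exact margS_antitone hmono hsub A subset_union_right

lemma mutcov_le_margS_left (hmono : Monotone f) (A B C : Finset V) :
    mutcov f A B C ≤ margS f A C := by
  rw [mutcov_eq_margS_sub]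
  exact sub_le_self _ (margS_nonneg hmono _ _)

lemma mutcov_le_margS_right (hmono : Monotone f) (A B C : Finset V) :
    mutcov f A B C ≤ margS f B C := by
  have : mutcov f A B C = mutcov f B A C := by rw [mutcov, mutcov, union_comm A B]; ring
  exact this ▸ mutcov_le_margS_left hmono B A C

end SetFunction

section Prefix

variable {V : Type*} [DecidableEq V] {n : ℕ}

lemma pref_zero (a : Fin n → V) : pref a 0 = ∅ := by
  simp [pref]

lemma pref_succ (a : Fin n → V) (j : Fin n) : pref a (j + 1) = insert (a j) (pref a j) := by
  ext v
  simp only [pref, mem_image, mem_filter, mem_univ, true_and, mem_insert, Nat.lt_succ_iff_lt_or_eq,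
    Fin.val_inj]
  grind

lemma mem_pref_iff_symm_lt (a : Fin n ≃ V) {v : V} {i : ℕ} :
    v ∈ pref a i ↔ (a.symm v : ℕ) < i := by
  simp only [pref, mem_image, mem_filter, mem_univ, true_and]
  exact ⟨fun ⟨j, hj, hjv⟩ => hjv ▸ (a.symm_apply_apply j).symm ▸ hj,
    fun h => ⟨a.symm v, h, a.apply_symm_apply v⟩⟩

lemma pref_eq_univ [Fintype V] (a : Fin n ≃ V) : pref a n = univ :=
  eq_univ_of_forall fun v => (mem_pref_iff_symm_lt a).2 (a.symm v).isLt

variable {f : Finset V → ℝ}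

lemma sum_margS_pref (a : Fin n → V) :
    ∑ i : Fin n, margS f {a i} (pref a i) = f (pref a n) - f (pref a 0) := by
  have hstep : ∀ i : Fin n, margS f {a i} (pref a i) = f (pref a (i + 1)) - f (pref a i) := by
    intro i
    rw [margS, pref_succ, insert_eq]
  rw [sum_congr rfl fun i _ => hstep i,
    Fin.sum_univ_eq_sum_range (fun k => f (pref a (k + 1)) - f (pref a k)), sum_range_sub (fun k => f (pref a k))]

lemma sum_mutcov_pref (ψ : Fin n → V) (b : V) (C : Finset V) :
    ∑ j : Fin n, mutcov f {b} {ψ j} (C ∪ pref ψ j)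
      = margS f {b} C - margS f {b} (C ∪ pref ψ n) := by
  have hstep : ∀ j : Fin n, mutcov f {b} {ψ j} (C ∪ pref ψ j)
      = margS f {b} (C ∪ pref ψ j) - margS f {b} (C ∪ pref ψ (j + 1)) := by
    intro j
    rw [mutcov_eq_margS_sub, pref_succ, union_insert, insert_eq]
  rw [sum_congr rfl fun j _ => hstep j, Fin.sum_univ_eq_sum_range
    (fun k => margS f {b} (C ∪ pref ψ k) - margS f {b} (C ∪ pref ψ (k + 1))), sum_range_sub',
    pref_zero, union_empty]

lemma sum_le_of_mul_le_margS_pref [Fintype V] (hmono : Monotone f) (hf0 : f ∅ = 0)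
    (hfN : 0 < f univ) (π : Fin n ≃ V) (w : Fin n → ℝ) {T : Finset (Fin n)} {κ : ℝ}
    (hκ : 0 ≤ κ) (h : ∀ i ∈ T, w i * f univ ≤ κ * margS f {π i} (pref π i)) :
    ∑ i ∈ T, w i ≤ κ := by
  have hgain : ∑ i ∈ T, margS f {π i} (pref π i) ≤ f univ := by
    calc ∑ i ∈ T, margS f {π i} (pref π i) ≤ ∑ i, margS f {π i} (pref π i) :=
          sum_le_sum_of_subset_of_nonneg (subset_univ T) fun i _ _ => margS_nonneg hmono _ _
      _ = f univ := by rw [sum_margS_pref, pref_eq_univ, pref_zero, hf0, sub_zero]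
  refine le_of_mul_le_mul_right ?_ hfN
  calc (∑ i ∈ T, w i) * f univ ≤ κ * ∑ i ∈ T, margS f {π i} (pref π i) := by
        rw [sum_mul, mul_sum]; exact sum_le_sum h
    _ ≤ κ * f univ := mul_le_mul_of_nonneg_left hgain hκ

end Prefix

section WeightedCoverage

variable {V : Type*} [DecidableEq V] {n : ℕ} {f : Finset V → ℝ} {c : V → ℝ}

/-- The weighted coverage of `b` placed right after the set `C`: both `mff_π(π_i)` (with
`C = π_{1:i−1}`) and the value `mff_{π′}(π′_p)` after a move are of this form. -/
noncomputable def mffAfter (f : Finset V → ℝ) (c : V → ℝ) (ψ : Fin n → V) (b : V)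
    (C : Finset V) : ℝ :=
  ∑ j : Fin n, mutcov f {b} {ψ j} (C ∪ pref ψ j) / (c b * c (ψ j))

lemma mffwMove_eq_mffAfter [Fintype V] (π ψ : Fin n → V) (p q : Fin n) :
    mffwMove f c π ψ p q = mffAfter f c ψ (π q) (pref π p) :=
  rfl

lemma mffAfter_term_nonneg (hmono : Monotone f) (hsub : IsSubmodular f) (hc : ∀ u, 0 < c u)
    (ψ : Fin n → V) (b : V) (C : Finset V) (j : Fin n) :
    0 ≤ mutcov f {b} {ψ j} (C ∪ pref ψ j) / (c b * c (ψ j)) :=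
  div_nonneg (mutcov_nonneg hmono hsub _ _ _) (mul_pos (hc b) (hc (ψ j))).le

lemma exists_mutcov_pos_of_mffAfter_pos (hc : ∀ u, 0 < c u) {ψ : Fin n → V} {b : V}
    {C : Finset V} (h : 0 < mffAfter f c ψ b C) :
    ∃ j, 0 < mutcov f {b} {ψ j} (C ∪ pref ψ j) := by
  by_contra! hnonpos
  exact h.not_ge <| sum_nonpos fun j _ =>
    div_nonpos_of_nonpos_of_nonneg (hnonpos j) (mul_pos (hc b) (hc (ψ j))).le

lemma margS_div_mul_self_le_mffAfter (hmono : Monotone f) (hsub : IsSubmodular f) (hc : ∀ u, 0 < c u)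
    (ψ : Fin n → V) (C : Finset V) (j : Fin n) :
    margS f {ψ j} (C ∪ pref ψ j) / (c (ψ j) * c (ψ j)) ≤ mffAfter f c ψ (ψ j) C := by
  rw [← mutcov_self]
  exact single_le_sum (fun j' _ => mffAfter_term_nonneg hmono hsub hc ψ (ψ j) C j') (mem_univ j)

lemma cost_le_sum_or_subset_pref (hc : ∀ u, 0 < c u) (ψ : Fin n ≃ V)
    (hψ : Monotone (c ∘ ψ)) (S : Finset V) (j : Fin n) :
    c (ψ j) ≤ ∑ u ∈ S, c u ∨ S ⊆ pref ψ j := by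
  refine or_iff_not_imp_right.2 fun hS => ?_
  obtain ⟨u, huS, hu⟩ := not_subset.1 hS
  have hj : j ≤ ψ.symm u := Fin.le_def.2 (not_lt.1 ((mem_pref_iff_symm_lt ψ).not.1 hu))
  calc c (ψ j) ≤ c (ψ (ψ.symm u)) := hψ hj
    _ = c u := by rw [ψ.apply_symm_apply]
    _ ≤ ∑ u ∈ S, c u := single_le_sum (fun u _ => (hc u).le) huS

lemma margS_div_le_mffAfter [Fintype V] (hmono : Monotone f) (hsub : IsSubmodular f) (hc : ∀ u, 0 < c u)
    (ψ : Fin n ≃ V) (hψ : Monotone (c ∘ ψ)) {S : Finset V} (hS : f S = f univ)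
    (b : V) (C : Finset V) :
    margS f {b} C / (c b * ∑ u ∈ S, c u) ≤ mffAfter f c ψ b C := by
  have hsum := sum_mutcov_pref (f := f) ψ b C
  rw [pref_eq_univ, margS_eq_zero_of_subset ((subset_univ _).trans subset_union_right),
    sub_zero] at hsum
  rw [← hsum, sum_div]
  refine sum_le_sum fun j _ => ?_
  have hI := mutcov_nonneg hmono hsub {b} {ψ j} (C ∪ pref ψ j)
  rcases cost_le_sum_or_subset_pref hc ψ hψ S j with hcost | hsubset
  · exact div_le_div_of_nonneg_left hI (mul_pos (hc b) (hc _))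
      (mul_le_mul_of_nonneg_left hcost (hc b).le)
  · have hfull : f (C ∪ pref ψ j) = f univ :=
      le_antisymm (hmono (subset_univ _)) (hS ▸ hmono (hsubset.trans subset_union_right))
    have hzero : mutcov f {b} {ψ j} (C ∪ pref ψ j) = 0 :=
      le_antisymm ((mutcov_le_margS_left hmono _ _ _).trans_eq
        (margS_eq_zero_of_apply_eq_univ hmono hfull _)) hI
    rw [hzero, zero_div, zero_div]

lemma mul_mffAfter_le (hmono : Monotone f) (hsub : IsSubmodular f) (hc : ∀ u, 0 < c u)
    (ψ : Fin n → V) (b : V) (C : Finset V) {K : ℝ} (hK0 : 0 ≤ K)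
    (hK : ∀ j, 0 < mutcov f {b} {ψ j} (C ∪ pref ψ j) → (c (ψ j))⁻¹ ≤ K) :
    c b * mffAfter f c ψ b C ≤ K * margS f {b} C := by
  have hterm : ∀ j, c b * (mutcov f {b} {ψ j} (C ∪ pref ψ j) / (c b * c (ψ j)))
      ≤ K * mutcov f {b} {ψ j} (C ∪ pref ψ j) := by
    intro j
    rw [← mul_div_assoc, mul_div_mul_left _ _ (hc b).ne', div_eq_mul_inv, mul_comm K]
    rcases (mutcov_nonneg hmono hsub {b} {ψ j} (C ∪ pref ψ j)).eq_or_lt with hI | hI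
    · rw [← hI, zero_mul, zero_mul]
    · exact mul_le_mul_of_nonneg_left (hK j hI) hI.le
  calc c b * mffAfter f c ψ b C
      ≤ K * ∑ j, mutcov f {b} {ψ j} (C ∪ pref ψ j) := by
        rw [mffAfter, mul_sum, mul_sum]
        exact sum_le_sum fun j _ => hterm j
    _ ≤ K * margS f {b} C := by
        rw [sum_mutcov_pref]
        exact mul_le_mul_of_nonneg_left (sub_le_self _ (margS_nonneg hmono _ _)) hK0

end WeightedCoverage

section LocalOptimum

variable {V : Type*} [Fintype V] [DecidableEq V] {n : ℕ} {f : Finset V → ℝ} {c : V → ℝ}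
  {γ : ℝ} {π ψ : Fin n → V}

def NoMoves (γ : ℝ) (f : Finset V → ℝ) (c : V → ℝ) (π ψ : Fin n → V) : Prop :=
  ∀ p q : Fin n, p < q → ∃ i : Fin n, p ≤ i ∧ i < q ∧ mffwMove f c π ψ p q < γ * mffw f c π ψ i

lemma mffwMove_lt_of_le (hγ : 1 < γ) (hNoSwaps : Antitone (mffw f c π ψ))
    (hNoMoves : NoMoves γ f c π ψ)
    {p q : Fin n} (hpq : p ≤ q) (hpos : 0 < mffw f c π ψ p) :
    mffwMove f c π ψ p q < γ * mffw f c π ψ p := by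
  rcases hpq.eq_or_lt with rfl | hlt
  · exact lt_mul_of_one_lt_left hpos hγ
  · obtain ⟨i, hpi, -, hmove⟩ := hNoMoves p q hlt
    exact hmove.trans_le (mul_le_mul_of_nonneg_left (hNoSwaps hpi) (by linarith))

lemma mffAfter_lt_of_notMem_pref {π : Fin n ≃ V} (hγ : 1 < γ)
    (hNoSwaps : Antitone (mffw f c π ψ))
    (hNoMoves : NoMoves γ f c π ψ)
    {i : Fin n} (hpos : 0 < mffw f c π ψ i) {u : V} (hu : u ∉ pref π i) :
    mffAfter f c ψ u (pref π i) < γ * mffw f c π ψ i := by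
  have hiu : i ≤ π.symm u := Fin.le_def.2 (not_lt.1 ((mem_pref_iff_symm_lt π).not.1 hu))
  have := mffwMove_lt_of_le hγ hNoSwaps hNoMoves hiu hpos
  rwa [mffwMove_eq_mffAfter, π.apply_symm_apply] at this

theorem lt_mul_mffw_mul_sq_of_pos (hmono : Monotone f) (hsub : IsSubmodular f) (hc : ∀ u, 0 < c u)
    (hγ : 1 < γ) {π ψ : Fin n ≃ V} (hψ : Monotone (c ∘ ψ))
    (hNoSwaps : Antitone (mffw f c π ψ))
    (hNoMoves : NoMoves γ f c π ψ)
    {fmin : ℝ} (hfmin_le : ∀ (u : V) (S : Finset V), 0 < marg f u S → fmin ≤ marg f u S)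
    {S : Finset V} (hS : f S = f univ) (hSne : S.Nonempty)
    {i : Fin n} (hpos : 0 < mffw f c π ψ i) :
    fmin < γ * mffw f c π ψ i * (∑ u ∈ S, c u) ^ 2 := by
  set M := mffw f c π ψ i
  set C := pref π i
  have hcopt : 0 < ∑ u ∈ S, c u := sum_pos (fun u _ => hc u) hSne
  have hfmin : fmin ≤ margS f {π i} C := by
    obtain ⟨j, hj⟩ := exists_mutcov_pos_of_mffAfter_pos hc hpos
    have hmarg := hj.trans_le (mutcov_le_margS_left hmono _ _ _)
    rw [margS_singleton] at hmarg
    have := hfmin_le _ _ hmarg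
    rw [← margS_singleton] at this
    exact this.trans (margS_antitone hmono hsub _ subset_union_left)
  have hterm : ∀ u ∈ S, margS f {u} C < γ * M * (∑ u ∈ S, c u) * c u := by
    intro u _
    have hbound : 0 < γ * M * (∑ u ∈ S, c u) * c u :=
      mul_pos (mul_pos (mul_pos (by linarith) hpos) hcopt) (hc u)
    by_cases hu : u ∈ C
    · rwa [margS_eq_zero_of_subset (singleton_subset_iff.2 hu)]
    · have hlow := margS_div_le_mffAfter hmono hsub hc ψ hψ hS u C
      have hup := mffAfter_lt_of_notMem_pref hγ hNoSwaps hNoMoves hpos hu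
      rw [div_le_iff₀ (mul_pos (hc u) hcopt)] at hlow
      nlinarith [mul_pos (hc u) hcopt]
  calc fmin ≤ margS f {π i} C := hfmin
    _ ≤ margS f S C := margS_le_margS_of_apply_eq_univ hmono hS _ _
    _ ≤ ∑ u ∈ S, margS f {u} C := margS_le_sum_margS_singleton hmono hsub S C
    _ < ∑ u ∈ S, γ * M * (∑ u ∈ S, c u) * c u := sum_lt_sum_of_nonempty hSne hterm
    _ = γ * M * (∑ u ∈ S, c u) ^ 2 := by rw [← mul_sum]; ring

lemma inv_cost_le_sqrt_of_mutcov_pos (hmono : Monotone f) (hsub : IsSubmodular f)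
    (hc : ∀ u, 0 < c u) (hγ : 1 < γ) {π ψ : Fin n ≃ V} (hNoSwaps : Antitone (mffw f c π ψ))
    (hNoMoves : NoMoves γ f c π ψ) {fmin : ℝ}
    (hfmin_le : ∀ (u : V) (S : Finset V), 0 < marg f u S → fmin ≤ marg f u S) (hfmin : 0 < fmin)
    {i : Fin n} (hpos : 0 < mffw f c π ψ i) {j : Fin n}
    (hj : 0 < mutcov f {π i} {ψ j} (pref π i ∪ pref ψ j)) :
    (c (ψ j))⁻¹ ≤ √(γ * mffw f c π ψ i / fmin) := by
  set C := pref π i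
  have hm := hj.trans_le (mutcov_le_margS_right hmono _ _ _)
  have hfm : fmin ≤ margS f {ψ j} (C ∪ pref ψ j) := by
    rw [margS_singleton] at hm ⊢
    exact hfmin_le _ _ hm
  have hnotMem : ψ j ∉ C := fun h => hm.ne'
    (margS_eq_zero_of_subset (singleton_subset_iff.2 (mem_union_left _ h)))
  have hlow := margS_div_mul_self_le_mffAfter hmono hsub hc ψ C j
  have hup := mffAfter_lt_of_notMem_pref hγ hNoSwaps hNoMoves hpos hnotMem
  have hcj := hc (ψ j)
  rw [div_le_iff₀ (mul_pos hcj hcj)] at hlow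
  rw [Real.le_sqrt (inv_nonneg.2 hcj.le) (div_nonneg (by positivity) hfmin.le), inv_pow,
    ← one_div, div_le_div_iff₀ (pow_pos hcj 2) hfmin]
  nlinarith [mul_pos hcj hcj]

theorem cost_mul_le_of_le_mffw (hmono : Monotone f) (hsub : IsSubmodular f) (hfN : 0 < f univ)
    (hc : ∀ u, 0 < c u) (hγ : 1 < γ) {π ψ : Fin n ≃ V} (hNoSwaps : Antitone (mffw f c π ψ))
    (hNoMoves : NoMoves γ f c π ψ) {fmin : ℝ}
    (hfmin_le : ∀ (u : V) (S : Finset V), 0 < marg f u S → fmin ≤ marg f u S) (hfmin : 0 < fmin)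
    {copt : ℝ} (hcopt : 0 < copt) {i : Fin n}
    (hθ : f univ ^ 2 / (fmin * copt ^ 2) ≤ mffw f c π ψ i) :
    c (π i) * f univ ≤ √γ * copt * margS f {π i} (pref π i) := by
  have hM : 0 < mffw f c π ψ i := lt_of_lt_of_le (by positivity) hθ
  have hrow := mul_mffAfter_le hmono hsub hc ψ (π i) (pref π i) (Real.sqrt_nonneg _)
    fun j hj => inv_cost_le_sqrt_of_mutcov_pos hmono hsub hc hγ hNoSwaps hNoMoves hfmin_le
      hfmin hM hj
  exact mul_le_sqrt_mul_mul_of_mul_le_sqrt (hc _).le hM hfmin hcopt (by linarith)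
    (margS_nonneg hmono _ _) hθ hrow

end LocalOptimum

theorem extreme_values_lemma_general {V : Type*} [Fintype V] [DecidableEq V]
    (f : Finset V → ℝ)
    (hmono : ∀ A B : Finset V, A ⊆ B → f A ≤ f B)
    (hsub : ∀ A B : Finset V, f (A ∪ B) + f (A ∩ B) ≤ f A + f B)
    (hf0 : f ∅ = 0) (hfN : 0 < f Finset.univ)
    (c : V → ℝ) (hc : ∀ u : V, 0 < c u)
    (γ : ℝ) (hγ : 1 < γ)
    (fmin : ℝ)
    (hfmin_le : ∀ (u : V) (S : Finset V), 0 < marg f u S → fmin ≤ marg f u S)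
    (hfmin_mem : ∃ (u : V) (S : Finset V), 0 < marg f u S ∧ marg f u S = fmin)
    (copt : ℝ)
    (hcopt_mem : ∃ Sstar : Finset V, f Sstar = f Finset.univ ∧ ∑ u ∈ Sstar, c u = copt)
    (π ψ : Fin (Fintype.card V) ≃ V)
    (hψ : ∀ j j' : Fin (Fintype.card V), j ≤ j' → c (ψ j) ≤ c (ψ j'))
    (hNoSwaps : ∀ i j : Fin (Fintype.card V), i ≤ j → mffw f c π ψ j ≤ mffw f c π ψ i)
    (hNoMoves : ∀ p q : Fin (Fintype.card V), p < q →
      ∃ i : Fin (Fintype.card V), p ≤ i ∧ i < q ∧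
        mffwMove f c π ψ p q < γ * mffw f c π ψ i) :
    (¬ ∃ i : Fin (Fintype.card V),
        0 < mffw f c π ψ i ∧ mffw f c π ψ i ≤ fmin / (γ * copt ^ 2)) ∧
    ∑ u ∈ (Finset.univ.filter fun i : Fin (Fintype.card V) =>
        f Finset.univ ^ 2 / (fmin * copt ^ 2) ≤ mffw f c π ψ i).image π, c u
      ≤ Real.sqrt γ * copt := by
  obtain ⟨S, hS, rfl⟩ := hcopt_mem
  have hfmin : 0 < fmin := by
    obtain ⟨_, _, hpos, rfl⟩ := hfmin_mem
    exact hpos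
  have hSne : S.Nonempty := nonempty_iff_ne_empty.2 fun hS0 => by
    rw [hS0, hf0] at hS
    linarith
  have hcopt : 0 < ∑ u ∈ S, c u := sum_pos (fun u _ => hc u) hSne
  refine ⟨fun ⟨i, hpos, hle⟩ => ?_, ?_⟩
  · have := lt_mul_mffw_mul_sq_of_pos hmono hsub hc hγ hψ hNoSwaps hNoMoves hfmin_le hS hSne hpos
    rw [le_div_iff₀ (mul_pos (by linarith) (pow_pos hcopt 2))] at hle
    linarith
  · rw [sum_image fun _ _ _ _ h => π.injective h]
    exact sum_le_of_mul_le_margS_pref hmono hf0 hfN π _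
      (mul_nonneg (Real.sqrt_nonneg _) hcopt.le) fun i hi =>
        cost_mul_le_of_le_mffw hmono hsub hfN hc hγ hNoSwaps hNoMoves hfmin_le hfmin hcopt
          (mem_filter.1 hi).2

/-- Extreme values lemma: if `π` has no swaps and no `γ`-moves with respect to the weighted
coverage, then (i) no element has weighted coverage in `(0, fmin/(γ·c_opt²)]`, and (ii) the
total cost of the elements of weighted coverage at least `f(N)²/(fmin·c_opt²)` is at most
`√γ · c_opt`. -/
theorem extreme_values_lemma {V : Type*} [Fintype V] [DecidableEq V]
    (f : Finset V → ℝ)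
    (hmono : ∀ A B : Finset V, A ⊆ B → f A ≤ f B)
    (hsub : ∀ A B : Finset V, f (A ∪ B) + f (A ∩ B) ≤ f A + f B)
    (hf0 : f ∅ = 0) (hfN : 0 < f Finset.univ)
    (c : V → ℝ) (hc : ∀ u : V, 0 < c u)
    (γ : ℝ) (hγ : 1 < γ)
    (fmin : ℝ)
    (hfmin_le : ∀ (u : V) (S : Finset V), 0 < marg f u S → fmin ≤ marg f u S)
    (hfmin_mem : ∃ (u : V) (S : Finset V), 0 < marg f u S ∧ marg f u S = fmin)
    (copt : ℝ)
    (hcopt_le : ∀ Sstar : Finset V, f Sstar = f Finset.univ → copt ≤ ∑ u ∈ Sstar, c u)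
    (hcopt_mem : ∃ Sstar : Finset V, f Sstar = f Finset.univ ∧ ∑ u ∈ Sstar, c u = copt)
    (π ψ : Fin (Fintype.card V) ≃ V)
    (hψ : ∀ j j' : Fin (Fintype.card V), j ≤ j' → c (ψ j) ≤ c (ψ j'))
    (hNoSwaps : ∀ i j : Fin (Fintype.card V), i ≤ j → mffw f c π ψ j ≤ mffw f c π ψ i)
    (hNoMoves : ∀ p q : Fin (Fintype.card V), p < q →
      ∃ i : Fin (Fintype.card V), p ≤ i ∧ i < q ∧
        mffwMove f c π ψ p q < γ * mffw f c π ψ i) :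
    (¬ ∃ i : Fin (Fintype.card V),
        0 < mffw f c π ψ i ∧ mffw f c π ψ i ≤ fmin / (γ * copt ^ 2)) ∧
    ∑ u ∈ (Finset.univ.filter fun i : Fin (Fintype.card V) =>
        f Finset.univ ^ 2 / (fmin * copt ^ 2) ≤ mffw f c π ψ i).image π, c u
      ≤ Real.sqrt γ * copt :=
  extreme_values_lemma_general f hmono hsub hf0 hfN c hc γ hγ fmin hfmin_le hfmin_mem copt hcopt_mem
    π ψ hψ hNoSwaps hNoMoves
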